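/- arXiv:1307.8095 — 4 statements merged into one kernel-verified Lean document; each statement's English description precedes it below -/
import Mathlib

section
/- Let β₁, β₂ be complex numbers with Re β₁ > -1 and Re β₂ > -1. If φ̂₁(ζ) = ζ^{β₁} g₁(ζ) and φ̂₂(ζ) = ζ^{β₂} g₂(ζ) with g₁, g₂ holomorphic near 0, then the convolution φ̂₁*φ̂₂(ζ) := ∫₀¹ φ̂₁((1-t)ζ) φ̂₂(tζ) ζ dt defines a germ of the form ζ^{β₁+β₂+1} g(ζ) with g holomorphic near 0. -/
open Complex MeasureTheory intervalIntegral

/-!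
For `ζ ≠ 0` the powers of `ζ` factor out of the integral, leaving
`g ζ = ∫₀¹ (1-t)^β₁ t^β₂ g₁((1-t)ζ) g₂(tζ) dt`. The weight `(1-t)^β₁ t^β₂` is the Beta integrand,
hence integrable, and on a smaller disc the functions `ζ ↦ g₁((1-t)ζ) g₂(tζ)` are holomorphic and
bounded uniformly in `t`. By the Cauchy estimate their derivatives are then uniformly bounded
too, so one may differentiate under the integral sign.
-/

open Filter Metric Set Topology

section ParametricIntegral

variable {α E : Type*} [MeasurableSpace α] {μ : Measure α}
  [NormedAddCommGroup E] [NormedSpace ℂ E]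

theorem norm_deriv_le_of_forall_mem_ball_norm_le {f : ℂ → E} {z : ℂ} {ε C : ℝ} (hε : 0 < ε)
    (hf : DifferentiableOn ℂ f (ball z ε)) (hC : ∀ w ∈ ball z ε, ‖f w‖ ≤ C) :
    ‖deriv f z‖ ≤ 2 * C / ε := by
  refine norm_deriv_le_div_of_mapsTo_ball hf (fun w hw => ?_) hε
  rw [mem_closedBall, dist_eq_norm]
  linarith [norm_sub_le (f w) (f z), hC w hw, hC z (mem_ball_self hε)]

theorem aestronglyMeasurable_deriv_of_differentiableOn {U : Set ℂ} (hU : IsOpen U)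
    {F : ℂ → α → E} (hF_meas : ∀ z ∈ U, AEStronglyMeasurable (F z) μ)
    (hF_diff : ∀ᵐ t ∂μ, DifferentiableOn ℂ (F · t) U) {z₀ : ℂ} (hz₀ : z₀ ∈ U) :
    AEStronglyMeasurable (fun t => deriv (F · t) z₀) μ := by
  obtain ⟨u, hu⟩ := (𝓝[≠] (0 : ℂ)).exists_seq_tendsto
  have hshift : {h : ℂ | z₀ + h ∈ U} ∈ 𝓝 0 :=
    (continuous_const.add continuous_id).continuousAt.preimage_mem_nhds
      (hU.mem_nhds (by simpa using hz₀))
  obtain ⟨N, hN⟩ := eventually_atTop.1 (hu.eventually (nhdsWithin_le_nhds hshift))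
  -- the difference quotients along the tail `u (n + N)` only evaluate `F` inside `U`
  refine aestronglyMeasurable_of_tendsto_ae atTop
    (f := fun n t => (u (n + N))⁻¹ • (F (z₀ + u (n + N)) t - F z₀ t))
    (fun n => ((hF_meas _ (hN _ (by omega))).sub (hF_meas _ hz₀)).const_smul _) ?_
  filter_upwards [hF_diff] with t ht
  exact ((ht.differentiableAt (hU.mem_nhds hz₀)).hasDerivAt.tendsto_slope_zero).comp
    (hu.comp (tendsto_add_atTop_nat N))

theorem differentiableOn_integral_of_dominated {U : Set ℂ} (hU : IsOpen U) {F : ℂ → α → E}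
    {b : α → ℝ} (hb : Integrable b μ)
    (hF_meas : ∀ z ∈ U, AEStronglyMeasurable (F z) μ)
    (hF_diff : ∀ᵐ t ∂μ, DifferentiableOn ℂ (F · t) U)
    (hF_le : ∀ᵐ t ∂μ, ∀ z ∈ U, ‖F z t‖ ≤ b t) :
    DifferentiableOn ℂ (fun z => ∫ t, F z t ∂μ) U := by
  intro z₀ hz₀
  obtain ⟨ε, hε, hball⟩ := isOpen_iff.1 hU z₀ hz₀
  have hε2 : 0 < ε / 2 := half_pos hε
  have hsub : ∀ z ∈ ball z₀ (ε / 2), ball z (ε / 2) ⊆ U := fun z hz =>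
    (ball_subset_ball' (by linarith [mem_ball.1 hz])).trans hball
  have hF_int : Integrable (F z₀) μ :=
    hb.mono' (hF_meas z₀ hz₀) (hF_le.mono fun t ht => ht z₀ hz₀)
  refine (hasDerivAt_integral_of_dominated_loc_of_deriv_le (F' := fun z t => deriv (F · t) z)
    (bound := fun t => 2 * b t / (ε / 2)) (ball_mem_nhds z₀ hε2)
    (eventually_of_mem (hU.mem_nhds hz₀) hF_meas) hF_int
    (aestronglyMeasurable_deriv_of_differentiableOn hU hF_meas hF_diff hz₀) ?_
    ((hb.const_mul 2).div_const _) ?_).2.differentiableAt.differentiableWithinAt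
  · filter_upwards [hF_diff, hF_le] with t hdiff hle z hz
    exact norm_deriv_le_of_forall_mem_ball_norm_le hε2 (hdiff.mono (hsub z hz))
      fun w hw => hle w (hsub z hz hw)
  · filter_upwards [hF_diff] with t hdiff z hz
    exact (hdiff.differentiableAt (hU.mem_nhds (hsub z hz (mem_ball_self hε2)))).hasDerivAt

end ParametricIntegral

theorem ofReal_mul_mem_ball_zero {s : ℝ} (hs : |s| ≤ 1) {r : ℝ} {ζ : ℂ}
    (hζ : ζ ∈ ball (0 : ℂ) r) : (s : ℂ) * ζ ∈ ball (0 : ℂ) r := by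
  rw [mem_ball_zero_iff, norm_mul, norm_real, Real.norm_eq_abs] at *
  nlinarith [abs_nonneg s, norm_nonneg ζ]

namespace DiffContOnCl

variable {g : ℂ → ℂ} {r : ℝ}

theorem exists_norm_comp_ofReal_mul_le (hg : DiffContOnCl ℂ g (ball 0 r)) :
    ∃ C, ∀ s : ℝ, |s| ≤ 1 → ∀ ζ ∈ ball (0 : ℂ) r, ‖g (s * ζ)‖ ≤ C := by
  obtain ⟨C, hC⟩ := isBounded_ball.isCompact_closure.exists_bound_of_continuousOn hg.continuousOn
  exact ⟨C, fun s hs ζ hζ => hC _ (subset_closure (ofReal_mul_mem_ball_zero hs hζ))⟩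

theorem differentiableOn_comp_ofReal_mul (hg : DiffContOnCl ℂ g (ball 0 r)) {s : ℝ}
    (hs : |s| ≤ 1) : DifferentiableOn ℂ (fun ζ => g (s * ζ)) (ball 0 r) :=
  hg.differentiableOn.comp (differentiableOn_id.const_mul _)
    fun _ hζ => ofReal_mul_mem_ball_zero hs hζ

theorem continuousOn_comp_ofReal_mul (hg : DiffContOnCl ℂ g (ball 0 r)) {ζ : ℂ}
    (hζ : ζ ∈ ball (0 : ℂ) r) : ContinuousOn (fun s : ℝ => g (s * ζ)) (Icc (-1) 1) :=
  hg.continuousOn.comp (by fun_prop) fun _ hs =>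
    subset_closure (ofReal_mul_mem_ball_zero (abs_le.2 hs) hζ)

end DiffContOnCl

theorem differentiableOn_integral_mul_comp_mul {w : ℝ → ℂ} (hw : IntervalIntegrable w volume 0 1)
    {g₁ g₂ : ℂ → ℂ} {r : ℝ} (hg₁ : DiffContOnCl ℂ g₁ (ball 0 r))
    (hg₂ : DiffContOnCl ℂ g₂ (ball 0 r)) :
    DifferentiableOn ℂ
      (fun ζ => ∫ t in (0 : ℝ)..1, w t * (g₁ ((1 - t : ℝ) * ζ) * g₂ (t * ζ))) (ball 0 r) := by
  obtain ⟨C₁, hC₁⟩ := hg₁.exists_norm_comp_ofReal_mul_le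
  obtain ⟨C₂, hC₂⟩ := hg₂.exists_norm_comp_ofReal_mul_le
  simp only [integral_of_le zero_le_one]
  have hw' : Integrable w (volume.restrict (Ioc 0 1)) :=
    (intervalIntegrable_iff_integrableOn_Ioc_of_le zero_le_one).1 hw
  have hunit : ∀ᵐ t ∂(volume.restrict (Ioc (0 : ℝ) 1)), |t| ≤ 1 ∧ |1 - t| ≤ 1 := by
    filter_upwards [ae_restrict_mem measurableSet_Ioc] with t ht
    constructor <;> rw [abs_le] <;> constructor <;> linarith [ht.1, ht.2]
  refine differentiableOn_integral_of_dominated isOpen_ball (hw'.norm.mul_const (C₁ * C₂))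
    (fun ζ hζ => hw'.aestronglyMeasurable.mul (ContinuousOn.aestronglyMeasurable ?_
      measurableSet_Ioc)) ?_ ?_
  · refine (((hg₁.continuousOn_comp_ofReal_mul hζ).comp (by fun_prop) fun t ht => ?_).mul
      ((hg₂.continuousOn_comp_ofReal_mul hζ).comp (by fun_prop) fun t ht => ?_))
    all_goals constructor <;> linarith [ht.1, ht.2]
  · filter_upwards [hunit] with t ⟨ht₀, ht₁⟩
    exact ((hg₁.differentiableOn_comp_ofReal_mul ht₁).mul
      (hg₂.differentiableOn_comp_ofReal_mul ht₀)).const_mul _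
  · filter_upwards [hunit] with t ⟨ht₀, ht₁⟩ ζ hζ
    rw [norm_mul, norm_mul]
    exact mul_le_mul_of_nonneg_left (mul_le_mul (hC₁ _ ht₁ ζ hζ) (hC₂ _ ht₀ ζ hζ)
      (norm_nonneg _) ((norm_nonneg _).trans (hC₁ _ ht₁ ζ hζ))) (norm_nonneg _)

theorem intervalIntegrable_one_sub_cpow_mul_cpow {β₁ β₂ : ℂ} (h₁ : -1 < β₁.re)
    (h₂ : -1 < β₂.re) :
    IntervalIntegrable (fun t : ℝ => ((1 - t : ℝ) : ℂ) ^ β₁ * (t : ℂ) ^ β₂) volume 0 1 := by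
  have := betaIntegral_convergent (u := β₂ + 1) (v := β₁ + 1) (by simp; linarith)
    (by simp; linarith)
  simpa [mul_comm] using this

/-- convolution of two germs of the form `ζ^β·(holomorphic)` with
`Re β₁, Re β₂ > -1` is of the form `ζ^(β₁+β₂+1)·(holomorphic)`. -/
theorem convolution_of_monomial_germs
    (β₁ β₂ : ℂ) (h₁ : -1 < β₁.re) (h₂ : -1 < β₂.re)
    (g₁ g₂ : ℂ → ℂ) (r₀ : ℝ) (hr₀ : 0 < r₀)
    (hg₁ : AnalyticOnNhd ℂ g₁ (Metric.ball 0 r₀))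
    (hg₂ : AnalyticOnNhd ℂ g₂ (Metric.ball 0 r₀)) :
    ∃ r : ℝ, 0 < r ∧ ∃ g : ℂ → ℂ, AnalyticOnNhd ℂ g (Metric.ball 0 r) ∧
      ∀ ζ : ℂ, ζ ∈ Metric.ball (0:ℂ) r → ζ ≠ 0 →
        (∫ t in (0:ℝ)..1,
          (((1 - t : ℝ) : ℂ) ^ β₁ * ζ ^ β₁ * g₁ (((1 - t : ℝ) : ℂ) * ζ)) *
          (((t : ℝ) : ℂ) ^ β₂ * ζ ^ β₂ * g₂ (((t : ℝ) : ℂ) * ζ)) * ζ)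
        = ζ ^ (β₁ + β₂ + 1) * g ζ := by
  have hball : closedBall (0 : ℂ) (r₀ / 2) ⊆ ball 0 r₀ := closedBall_subset_ball (by linarith)
  refine ⟨r₀ / 2, half_pos hr₀, fun ζ => ∫ t in (0 : ℝ)..1,
    ((1 - t : ℝ) : ℂ) ^ β₁ * (t : ℂ) ^ β₂ * (g₁ ((1 - t : ℝ) * ζ) * g₂ (t * ζ)), ?_, ?_⟩
  · exact (differentiableOn_integral_mul_comp_mul (intervalIntegrable_one_sub_cpow_mul_cpow h₁ h₂)
      (hg₁.differentiableOn.diffContOnCl_ball hball)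
      (hg₂.differentiableOn.diffContOnCl_ball hball)).analyticOnNhd isOpen_ball
  · intro ζ _ hζ
    rw [cpow_add _ _ hζ, cpow_add _ _ hζ, cpow_one, ← intervalIntegral.integral_const_mul]
    refine integral_congr fun t _ => ?_
    ring
end

section
/- Let Re β ≥ 0. The operator C_{id-1} - Id : φ̃(z) ↦ φ̃(z-1) - φ̃(z) maps z^{-β-1}ℂ[[z^{-1}]] into z^{-β-2}ℂ[[z^{-1}]] bijectively. -/
open Finset

/-- Coefficient of `w^k` in the binomial series `(1-w)^{-n-β-1}`. -/
noncomputable def binomCoeff (β : ℂ) (n k : ℕ) : ℂ :=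
  (∏ j ∈ Finset.range k, ((n : ℂ) + β + 1 + (j : ℂ))) / (k.factorial : ℂ)

/-- The operator `C_{id-1} - Id : φ̃(z) ↦ φ̃(z-1) - φ̃(z)`, acting on coefficients:
a series `z^{-β-1}∑ c_n z^{-n}` is sent to `z^{-β-2}∑ (Tmap β c)_m z^{-m}`. -/
noncomputable def Tmap (β : ℂ) (c : ℕ → ℂ) : ℕ → ℂ :=
  fun m => ∑ n ∈ Finset.range (m + 1), c n * binomCoeff β n (m + 1 - n)

/-!
In the basis `z^{-β-1-n}`, `C_{id-1} - Id` is an infinite lower triangular matrix: the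
coefficient of `z^{-β-2-m}` in the image only involves `c_0, …, c_m`, and `c_m` enters with
the factor `m + β + 1`, which does not vanish when `Re β ≥ 0`. A lower triangular matrix
with nonzero diagonal is solved by forward substitution.
-/

namespace LowerTriangular

variable {K : Type*} [Field K]

def apply (a : ℕ → ℕ → K) (c : ℕ → K) : ℕ → K :=
  fun m => ∑ n ∈ range (m + 1), c n * a m n

theorem apply_eq (a : ℕ → ℕ → K) (c : ℕ → K) (m : ℕ) :
    apply a c m = ∑ n ∈ range m, c n * a m n + c m * a m m :=
  sum_range_succ _ _

def solve (a : ℕ → ℕ → K) (d : ℕ → K) : ℕ → K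
  | m => (d m - ∑ n ∈ (range m).attach, solve a d n * a m n) / a m m
  decreasing_by exact mem_range.mp n.2

theorem solve_eq (a : ℕ → ℕ → K) (d : ℕ → K) (m : ℕ) :
    solve a d m = (d m - ∑ n ∈ range m, solve a d n * a m n) / a m m := by
  rw [solve, sum_attach (range m) fun n => solve a d n * a m n]

variable {a : ℕ → ℕ → K}

theorem apply_solve (ha : ∀ m, a m m ≠ 0) (d : ℕ → K) : apply a (solve a d) = d := by
  funext m
  rw [apply_eq, solve_eq a d m, div_mul_cancel₀ _ (ha m), add_sub_cancel]

theorem apply_injective (ha : ∀ m, a m m ≠ 0) : Function.Injective (apply a) := by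
  intro c c' h
  funext m
  induction m using Nat.strong_induction_on with
  | _ m ih =>
    have hm := congrFun h m
    rw [apply_eq, apply_eq, sum_congr rfl fun n hn => by rw [ih n (mem_range.mp hn)]] at hm
    exact mul_right_cancel₀ (ha m) (add_left_cancel hm)

theorem apply_bijective (ha : ∀ m, a m m ≠ 0) : Function.Bijective (apply a) :=
  ⟨apply_injective ha, fun d => ⟨solve a d, apply_solve ha d⟩⟩

end LowerTriangular

theorem binomCoeff_one (β : ℂ) (n : ℕ) : binomCoeff β n 1 = n + β + 1 := by
  simp [binomCoeff]

theorem natCast_add_add_one_ne_zero {β : ℂ} (hβ : 0 ≤ β.re) (m : ℕ) : (m : ℂ) + β + 1 ≠ 0 := by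
  intro h
  have := congrArg Complex.re h
  simp only [Complex.add_re, Complex.natCast_re, Complex.one_re, Complex.zero_re] at this
  linarith [(m.cast_nonneg : (0 : ℝ) ≤ m)]

/-- for `Re β ≥ 0`, the operator `C_{id-1} - Id` maps
`z^{-β-1}ℂ[[z^{-1}]]` into `z^{-β-2}ℂ[[z^{-1}]]` bijectively. -/
theorem shift_minus_id_bijective (β : ℂ) (hβ : 0 ≤ β.re) :
    Function.Bijective (Tmap β) :=
  LowerTriangular.apply_bijective (a := fun m n => binomCoeff β n (m + 1 - n)) fun m => by
    rw [Nat.add_sub_cancel_left, binomCoeff_one]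
    exact natCast_add_add_one_ne_zero hβ m
end

section
/- Uniqueness for the linearized Abel-type equation: given b ∈ z^{-1}ℂ{z^{-1}} and b_N ∈ z^{-N-2}ℂ[[z^{-1}]], the equation ψ̃(z-1) - ψ̃(z+b(z)) = b_N(z) has at most one solution ψ̃ in z^{-1}ℂ[[z^{-1}]]; if a solution exists it lies in z^{-N-1}ℂ[[z^{-1}]]. -/
/-!
Series in `z⁻¹` are power series in `w = z⁻¹`; the shifts `z ↦ z - 1` and `z ↦ z + b(z)` become
`w ↦ w u₁(w)` and `w ↦ w u₂(w)` with `u₁ = (1 - w)⁻¹`, `u₂ = (1 + w b̃)⁻¹`, so `u₁(0) = u₂(0) = 1`.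
If `ψ = O(w^(m+1))`, then
`ψ(w u₁) - ψ(w u₂) = (m+1) (u₁'(0) - u₂'(0)) ψ_{m+1} w^(m+2) + O(w^(m+3))`,
and `u₁'(0) = 1 ≠ 0 = -b̃(0) = u₂'(0)`. Hence the difference operator raises the order of every
nonzero series without constant term by exactly one: a right-hand side of order `≥ N + 2` forces
`ψ` to have order `≥ N + 1`, and by linearity the solution is unique.
-/

open PowerSeries Finset

/-- Substitution `f(g(w))` of a power series `g` with zero constant term into `f`
(coefficientwise; the formula below is the correct one when `constantCoeff g = 0`). -/
noncomputable def subs (g f : PowerSeries ℂ) : PowerSeries ℂ :=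
  PowerSeries.mk fun n =>
    ∑ k ∈ Finset.range (n + 1), (PowerSeries.coeff k f) * PowerSeries.coeff n (g ^ k)

lemma PowerSeries.coeff_one_inv_of_constantCoeff_eq_one {k : Type*} [Field k] {φ : k⟦X⟧}
    (hφ : constantCoeff φ = 1) : coeff 1 φ⁻¹ = -coeff 1 φ := by
  have h := congrArg (coeff 1) (PowerSeries.mul_inv_cancel φ (by simp [hφ]))
  rw [coeff_one_mul, constantCoeff_inv, hφ] at h
  simpa [eq_neg_iff_add_eq_zero, add_comm] using h

lemma subs_sub (g f₁ f₂ : ℂ⟦X⟧) : subs g (f₁ - f₂) = subs g f₁ - subs g f₂ := by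
  ext n
  simp [subs, Finset.sum_sub_distrib, sub_mul]

lemma coeff_subs_X_mul_of_coeff_eq_zero {u ψ : ℂ⟦X⟧} (hu : constantCoeff u = 1) {m : ℕ}
    (hψ : ∀ k ≤ m, coeff k ψ = 0) :
    coeff (m + 2) (subs (X * u) ψ) = (m + 1) * coeff 1 u * coeff (m + 1) ψ + coeff (m + 2) ψ := by
  have hlow : ∑ k ∈ range (m + 1), coeff k ψ * coeff (m + 2) ((X * u) ^ k) = 0 :=
    Finset.sum_eq_zero fun k hk => by rw [hψ k (Nat.lt_succ_iff.mp (mem_range.mp hk)), zero_mul]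
  have hsub : coeff (m + 2) ((X * u) ^ (m + 1)) = (m + 1) * coeff 1 u := by
    rw [mul_pow, coeff_X_pow_mul', if_pos (by omega), show m + 2 - (m + 1) = 1 by omega,
      coeff_one_pow, hu]
    push_cast; ring
  have hdiag : coeff (m + 2) ((X * u) ^ (m + 2)) = 1 := by
    rw [mul_pow, coeff_X_pow_mul', if_pos le_rfl, Nat.sub_self, coeff_zero_eq_constantCoeff,
      map_pow, hu, one_pow]
  simp only [subs, coeff_mk, sum_range_succ, hlow, hsub, hdiag]
  ring

lemma coeff_subs_sub_subs_of_coeff_eq_zero {u₁ u₂ ψ : ℂ⟦X⟧} (hu₁ : constantCoeff u₁ = 1)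
    (hu₂ : constantCoeff u₂ = 1) {m : ℕ} (hψ : ∀ k ≤ m, coeff k ψ = 0) :
    coeff (m + 2) (subs (X * u₁) ψ - subs (X * u₂) ψ) =
      (m + 1) * (coeff 1 u₁ - coeff 1 u₂) * coeff (m + 1) ψ := by
  rw [map_sub, coeff_subs_X_mul_of_coeff_eq_zero hu₁ hψ, coeff_subs_X_mul_of_coeff_eq_zero hu₂ hψ]
  ring

lemma coeff_eq_zero_of_coeff_subs_sub_subs_eq_zero {u₁ u₂ ψ : ℂ⟦X⟧}
    (hu₁ : constantCoeff u₁ = 1) (hu₂ : constantCoeff u₂ = 1) (hne : coeff 1 u₁ ≠ coeff 1 u₂)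
    (hψ : constantCoeff ψ = 0) {N : ℕ}
    (h : ∀ n < N + 2, coeff n (subs (X * u₁) ψ - subs (X * u₂) ψ) = 0) :
    ∀ n < N + 1, coeff n ψ = 0 := by
  suffices ∀ m ≤ N, ∀ k ≤ m, coeff k ψ = 0 from fun n hn => this N le_rfl n (by omega)
  intro m
  induction m with
  | zero => simpa using hψ
  | succ m ih =>
    intro hm k hk
    have hlow := ih (by omega)
    rcases Nat.lt_or_ge k (m + 1) with hk' | hk'
    · exact hlow k (by omega)
    have hcoeff := coeff_subs_sub_subs_of_coeff_eq_zero hu₁ hu₂ hlow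
    rw [h (m + 2) (by omega), eq_comm, mul_eq_zero, mul_eq_zero] at hcoeff
    obtain rfl : k = m + 1 := by omega
    exact hcoeff.resolve_left (by
      rintro (hm_zero | hdiff_zero)
      · exact Nat.cast_add_one_ne_zero m hm_zero
      · exact hne (sub_eq_zero.mp hdiff_zero))

lemma eq_of_subs_sub_subs_eq {u₁ u₂ ψ₁ ψ₂ : ℂ⟦X⟧}
    (hu₁ : constantCoeff u₁ = 1) (hu₂ : constantCoeff u₂ = 1) (hne : coeff 1 u₁ ≠ coeff 1 u₂)
    (h₁ : constantCoeff ψ₁ = 0) (h₂ : constantCoeff ψ₂ = 0)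
    (h : subs (X * u₁) ψ₁ - subs (X * u₂) ψ₁ = subs (X * u₁) ψ₂ - subs (X * u₂) ψ₂) :
    ψ₁ = ψ₂ := by
  ext n
  have hdiff : subs (X * u₁) (ψ₁ - ψ₂) - subs (X * u₂) (ψ₁ - ψ₂) = 0 := by
    rw [subs_sub, subs_sub, sub_sub_sub_comm, h, sub_self]
  have := coeff_eq_zero_of_coeff_subs_sub_subs_eq_zero hu₁ hu₂ hne (ψ := ψ₁ - ψ₂)
    (by rw [map_sub, h₁, h₂, sub_zero]) (N := n) (by simp [hdiff]) n (by omega)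
  rwa [map_sub, sub_eq_zero] at this

/-- uniqueness for the linearized Abel-type equation
`ψ̃(z-1) - ψ̃(z+b(z)) = b_N(z)`. Formal series in `z^{-1}` are written as power
series in `w = z^{-1}`; `C_{id-1}` and `C_{id+b}` are `subs g₁`, `subs g₂` with
`g₁ = w/(1-w)`, `g₂ = w/(1+w b̃)`, `b̃ ∈ wℂ[[w]]`. For `b_N ∈ z^{-N-2}ℂ[[z^{-1}]]`
the equation has at most one solution `ψ̃ ∈ z^{-1}ℂ[[z^{-1}]]`, and any solution
lies in `z^{-N-1}ℂ[[z^{-1}]]`. -/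
theorem linearized_equation_uniqueness (btilde bN : PowerSeries ℂ) (N : ℕ)
    (hb : PowerSeries.constantCoeff btilde = 0)
    (hbN : ∀ n < N + 2, PowerSeries.coeff n bN = 0)
    (g₁ g₂ : PowerSeries ℂ)
    (hg₁ : g₁ = PowerSeries.X * (1 - PowerSeries.X)⁻¹)
    (hg₂ : g₂ = PowerSeries.X * (1 + PowerSeries.X * btilde)⁻¹) :
    (∀ ψ₁ ψ₂ : PowerSeries ℂ,
        PowerSeries.constantCoeff ψ₁ = 0 → PowerSeries.constantCoeff ψ₂ = 0 →
        subs g₁ ψ₁ - subs g₂ ψ₁ = bN → subs g₁ ψ₂ - subs g₂ ψ₂ = bN → ψ₁ = ψ₂) ∧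
    ∀ ψ : PowerSeries ℂ, PowerSeries.constantCoeff ψ = 0 →
      subs g₁ ψ - subs g₂ ψ = bN → ∀ n < N + 1, PowerSeries.coeff n ψ = 0 := by
  subst hg₁ hg₂
  have hc₁ : constantCoeff (1 - X : ℂ⟦X⟧) = 1 := by simp
  have hc₂ : constantCoeff (1 + X * btilde) = 1 := by simp
  have hu₁ : constantCoeff (1 - X : ℂ⟦X⟧)⁻¹ = 1 := by simp [hc₁]
  have hu₂ : constantCoeff (1 + X * btilde)⁻¹ = 1 := by simp [hc₂]
  have hne : coeff 1 (1 - X : ℂ⟦X⟧)⁻¹ ≠ coeff 1 (1 + X * btilde)⁻¹ := by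
    rw [coeff_one_inv_of_constantCoeff_eq_one hc₁, coeff_one_inv_of_constantCoeff_eq_one hc₂]
    simp [coeff_succ_X_mul 0, hb]
  refine ⟨fun ψ₁ ψ₂ h₁ h₂ he₁ he₂ => eq_of_subs_sub_subs_eq hu₁ hu₂ hne h₁ h₂ (he₁.trans he₂.symm),
    fun ψ hψ he => coeff_eq_zero_of_coeff_subs_sub_subs_eq_zero hu₁ hu₂ hne hψ (he ▸ hbN)⟩
end

section
/- Let φ̂ be holomorphic near 0 of the form ζ^β g(ζ) with g holomorphic, g(0) ≠ 0, Re β ≥ 0, and let γ: (0,ℓ] → ℂ be a naturally parametrized path with γ(s) = s e^{iθ} for s ≤ ε, staying at distance > ε from 2πiℤ∖{0} for s ≥ ε, along which φ̂ admits analytic continuation with |cont_γ φ̂(γ(s))| ≤ C s^{Re β + ℓ₀} for some ℓ₀ ≥ 0. Then the function ζ ↦ φ̂(ζ)/(e^ζ - 1) admits analytic continuation along γ and satisfies |cont_γ (φ̂/(e^ζ-1))(γ(s))| ≤ C M₀ κ^{-1} s^{Re β + ℓ₀ - 1} for constants M₀, κ depending only on ε and the length bound L, where κ s ≤ |γ(s)|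 and M₀ bounds |ζ/(e^ζ-1)| on the relevant region. -/
open Complex Real Set

/-! Off the poles the quotient is holomorphic, and along `γ` one writes
`Φ/(e^ζ - 1) = Φ · (ζ/(e^ζ - 1)) · ζ⁻¹`: the middle factor is at most `M₀` because `γ` stays
away from `2πiℤ∖{0}` (on the initial ray because `|γ(s)| = s ≤ ε < 1`), and `|ζ⁻¹| ≤ (κ s)⁻¹`
costs the one power of `s`. -/

theorem differentiableOn_div_exp_sub_one {U : Set ℂ} {Φ : ℂ → ℂ}
    (hΦ : DifferentiableOn ℂ Φ U) :
    DifferentiableOn ℂ (fun ζ => Φ ζ / (exp ζ - 1))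
      (U \ {ζ : ℂ | ∃ k : ℤ, ζ = 2 * π * I * k}) := by
  refine (hΦ.mono sdiff_subset).div
    (Complex.differentiable_exp.sub (differentiable_const 1)).differentiableOn ?_
  rintro ζ ⟨-, hζ⟩
  rw [sub_ne_zero]
  intro h
  obtain ⟨k, hk⟩ := exp_eq_one_iff.mp h
  exact hζ ⟨k, by rw [hk]; ring⟩

theorem two_pi_sub_norm_le_norm_sub_two_pi_I_mul_int (ζ : ℂ) {k : ℤ} (hk : k ≠ 0) :
    2 * π - ‖ζ‖ ≤ ‖ζ - 2 * π * I * k‖ := by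
  have hk1 : (1 : ℝ) ≤ |(k : ℝ)| := by exact_mod_cast Int.one_le_abs hk
  have hpole : ‖2 * π * I * (k : ℂ)‖ = 2 * π * |(k : ℝ)| := by
    simp only [norm_mul, Complex.norm_ofNat, norm_real, Real.norm_of_nonneg pi_pos.le, norm_I, mul_one,
      norm_intCast]
  calc 2 * π - ‖ζ‖ ≤ ‖2 * π * I * (k : ℂ)‖ - ‖ζ‖ := by
        rw [hpole]; nlinarith [pi_pos]
    _ ≤ ‖ζ - 2 * π * I * k‖ := by
        rw [norm_sub_rev]; exact norm_sub_norm_le _ _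

theorem norm_div_le_of_norm_div_le {𝕜 : Type*} [NormedDivisionRing 𝕜] {w z d : 𝕜}
    {A M r : ℝ} (hz : ‖z / d‖ ≤ M) (hr : r ≤ ‖z‖) (hr0 : 0 < r) (hw : ‖w‖ ≤ A) :
    ‖w / d‖ ≤ A * M / r := by
  have hA : 0 ≤ A := (norm_nonneg w).trans hw
  rcases eq_or_ne d 0 with rfl | hd
  · rw [div_zero, norm_zero] at hz ⊢
    exact div_nonneg (mul_nonneg hA hz) hr0.le
  have hd' : 0 < ‖d‖ := norm_pos_iff.2 hd
  have hrM : r ≤ M * ‖d‖ := hr.trans (by rwa [norm_div, div_le_iff₀ hd'] at hz)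
  rw [norm_div, div_le_div_iff₀ hd' hr0]
  calc ‖w‖ * r ≤ A * (M * ‖d‖) := mul_le_mul hw hrM hr0.le hA
    _ = A * M * ‖d‖ := by ring

theorem division_by_exp_minus_one_along_path_general
    (β : ℂ) (ε L len κ M₀ C ℓ₀ θ : ℝ)
    (hε : ε ∈ Set.Ioo (0:ℝ) 1) (hκ : 0 < κ)
    (γ : ℝ → ℂ) (U : Set ℂ) (Φ : ℂ → ℂ)
    (hΦ : DifferentiableOn ℂ Φ U)
    (hray : ∀ s ∈ Set.Ioc (0:ℝ) len, s ≤ ε → γ s = (s : ℂ) * Complex.exp (θ * I))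
    (hdist : ∀ s ∈ Set.Ioc (0:ℝ) len, ε ≤ s →
      ∀ k : ℤ, k ≠ 0 → ε < ‖γ s - 2 * π * I * (k : ℂ)‖)
    (hbound : ∀ s ∈ Set.Ioc (0:ℝ) len, ‖Φ (γ s)‖ ≤ C * s ^ (β.re + ℓ₀))
    (hκγ : ∀ s ∈ Set.Ioc (0:ℝ) len, κ * s ≤ ‖γ s‖)
    (hγL : ∀ s ∈ Set.Ioc (0:ℝ) len, ‖γ s‖ < L)
    (hM₀ : ∀ ζ : ℂ, ‖ζ‖ < L →
      (∀ k : ℤ, k ≠ 0 → ε < ‖ζ - 2 * π * I * (k : ℂ)‖) →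
      ‖ζ / (Complex.exp ζ - 1)‖ ≤ M₀) :
    DifferentiableOn ℂ (fun ζ => Φ ζ / (Complex.exp ζ - 1))
        (U \ {ζ : ℂ | ∃ k : ℤ, ζ = 2 * π * I * (k : ℂ)}) ∧
      ∀ s ∈ Set.Ioc (0:ℝ) len,
        ‖Φ (γ s) / (Complex.exp (γ s) - 1)‖ ≤ C * M₀ * κ⁻¹ * s ^ (β.re + ℓ₀ - 1) := by
  refine ⟨differentiableOn_div_exp_sub_one hΦ, fun s hs => ?_⟩
  have hfar : ∀ k : ℤ, k ≠ 0 → ε < ‖γ s - 2 * π * I * k‖ := by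
    rcases le_total ε s with hεs | hsε
    · exact hdist s hs hεs
    intro k hk
    have hnorm : ‖γ s‖ = s := by
      rw [hray s hs hsε, norm_mul, norm_exp_ofReal_mul_I, mul_one, norm_real,
        Real.norm_of_nonneg hs.1.le]
    have := two_pi_sub_norm_le_norm_sub_two_pi_I_mul_int (γ s) hk
    linarith [pi_gt_three, hε.2]
  calc ‖Φ (γ s) / (exp (γ s) - 1)‖ ≤ C * s ^ (β.re + ℓ₀) * M₀ / (κ * s) :=
        norm_div_le_of_norm_div_le (hM₀ _ (hγL s hs) hfar) (hκγ s hs) (by nlinarith [hs.1])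
          (hbound s hs)
    _ = C * M₀ * κ⁻¹ * s ^ (β.re + ℓ₀ - 1) := by
        rw [rpow_sub_one hs.1.ne']
        field_simp

/-- dividing (the analytic continuation `Φ` along `γ` of) a germ
`φ̂ = ζ^β g(ζ)` by `e^ζ - 1` preserves analytic continuability along paths avoiding
`2πiℤ` and costs exactly one power of `s` in the bounds:
`|cont_γ(φ̂/(e^ζ-1))(γ(s))| ≤ C M₀ κ⁻¹ s^{Re β + ℓ₀ - 1}`, where `κ s ≤ |γ(s)|`
and `M₀` bounds `|ζ/(e^ζ-1)|` on the relevant region. -/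
theorem division_by_exp_minus_one_along_path
    (β : ℂ) (hβ : 0 ≤ β.re) (g : ℂ → ℂ) (hg : AnalyticAt ℂ g 0) (hg0 : g 0 ≠ 0)
    (ε L len κ M₀ C ℓ₀ θ : ℝ)
    (hε : ε ∈ Set.Ioo (0:ℝ) 1) (hL : 1 < L) (hlen : len ∈ Set.Ioo (0:ℝ) L)
    (hκ : 0 < κ) (hℓ₀ : 0 ≤ ℓ₀) (hC : 0 ≤ C) (hM₀pos : 0 ≤ M₀)
    (γ : ℝ → ℂ) (U : Set ℂ) (Φ : ℂ → ℂ)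
    (hU : IsOpen U) (hΦ : DifferentiableOn ℂ Φ U)
    (hγU : ∀ s ∈ Set.Ioc (0:ℝ) len, γ s ∈ U)
    (hray : ∀ s ∈ Set.Ioc (0:ℝ) len, s ≤ ε → γ s = (s : ℂ) * Complex.exp (θ * I))
    (hdist : ∀ s ∈ Set.Ioc (0:ℝ) len, ε ≤ s →
      ∀ k : ℤ, k ≠ 0 → ε < ‖γ s - 2 * π * I * (k : ℂ)‖)
    (hΦg : ∀ s ∈ Set.Ioc (0:ℝ) len, s ≤ ε → Φ (γ s) = (γ s) ^ β * g (γ s))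
    (hbound : ∀ s ∈ Set.Ioc (0:ℝ) len, ‖Φ (γ s)‖ ≤ C * s ^ (β.re + ℓ₀))
    (hκγ : ∀ s ∈ Set.Ioc (0:ℝ) len, κ * s ≤ ‖γ s‖)
    (hγL : ∀ s ∈ Set.Ioc (0:ℝ) len, ‖γ s‖ < L)
    (hM₀ : ∀ ζ : ℂ, ‖ζ‖ < L →
      (∀ k : ℤ, k ≠ 0 → ε < ‖ζ - 2 * π * I * (k : ℂ)‖) →
      ‖ζ / (Complex.exp ζ - 1)‖ ≤ M₀) :
    DifferentiableOn ℂ (fun ζ => Φ ζ / (Complex.exp ζ - 1))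
        (U \ {ζ : ℂ | ∃ k : ℤ, ζ = 2 * π * I * (k : ℂ)}) ∧
      ∀ s ∈ Set.Ioc (0:ℝ) len,
        ‖Φ (γ s) / (Complex.exp (γ s) - 1)‖ ≤ C * M₀ * κ⁻¹ * s ^ (β.re + ℓ₀ - 1) :=
  division_by_exp_minus_one_along_path_general β ε L len κ M₀ C ℓ₀ θ hε hκ γ U Φ hΦ hray hdist
    hbound hκγ hγL hM₀
end
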